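/- Let φ : ℝ^{n×s} → ℝ^N, J(A) = ‖φ(A)‖₁, δ_r(A) = inf{‖φ(A)−w‖₁ : ‖w‖₀ ≤ r}, and ξ_r the r-th concentration ratio of φ. Suppose ξ_r < 1/2 and that Â minimizes J over ℝ^{n×s}. Then for every A ∈ ℝ^{n×s}: ‖φ(A) − φ(Â)‖₁ ≤ (2/(1 − 2ξ_r))·δ_r(A). -/

import Mathlib

open Finset

/-!
Write `u = φ(A)`, `v = φ(Â)` and let `w` be `r`-sparse with support `T`. Since `‖v‖₁ ≤ ‖u‖₁`,
the mass of `v` off `T` is at most the mass of `u` off `T` plus `‖(u - v)_T‖₁`, so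
`‖u - v‖₁ ≤ 2‖(u - v)_T‖₁ + 2‖u_{Tᶜ}‖₁ ≤ 2 ξ_r ‖u - v‖₁ + 2‖u - w‖₁`.
Taking the infimum over `w` gives `(1 - 2ξ_r) ‖u - v‖₁ ≤ 2 δ_r(A)`.
-/

/-- The `r`-th concentration ratio of a map `φ : ℝ^{n×s} → ℝ^N`. -/
noncomputable def xi {n s N : ℕ} (φ : Matrix (Fin n) (Fin s) ℝ → (Fin N → ℝ)) (r : ℕ) : ℝ :=
  sSup {c : ℝ | ∃ A A' : Matrix (Fin n) (Fin s) ℝ, ∃ T : Finset (Fin N),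
    φ A ≠ φ A' ∧ T.card ≤ r ∧
    c = (∑ t ∈ T, |φ A t - φ A' t|) / (∑ t, |φ A t - φ A' t|)}

/-- The cost `J(A) = ‖φ(A)‖₁`. -/
noncomputable def Jcost {n s N : ℕ} (φ : Matrix (Fin n) (Fin s) ℝ → (Fin N → ℝ))
    (A : Matrix (Fin n) (Fin s) ℝ) : ℝ :=
  ∑ t, |φ A t|

/-- `δ_r(A)`: the ℓ¹ distance from `φ(A)` to the set of `r`-sparse vectors. -/
noncomputable def deltaR {n s N : ℕ} (φ : Matrix (Fin n) (Fin s) ℝ → (Fin N → ℝ))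
    (r : ℕ) (A : Matrix (Fin n) (Fin s) ℝ) : ℝ :=
  sInf {c : ℝ | ∃ w : Fin N → ℝ,
    (Finset.univ.filter (fun t => w t ≠ 0)).card ≤ r ∧ c = ∑ t, |φ A t - w t|}

lemma sum_abs_sub_le_of_sum_abs_le {ι : Type*} [Fintype ι] [DecidableEq ι] {u v : ι → ℝ}
    (T : Finset ι) (h : ∑ t, |v t| ≤ ∑ t, |u t|) :
    ∑ t, |u t - v t| ≤ 2 * ∑ t ∈ T, |u t - v t| + 2 * ∑ t ∈ Tᶜ, |u t| := by
  have hT : ∑ t ∈ T, |u t| ≤ ∑ t ∈ T, |v t| + ∑ t ∈ T, |u t - v t| := by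
    rw [← sum_add_distrib]
    exact sum_le_sum fun t _ => by linarith [abs_sub_abs_le_abs_sub (u t) (v t)]
  have hTc : ∑ t ∈ Tᶜ, |u t - v t| ≤ ∑ t ∈ Tᶜ, |u t| + ∑ t ∈ Tᶜ, |v t| := by
    rw [← sum_add_distrib]
    exact sum_le_sum fun t _ => abs_sub (u t) (v t)
  rw [← sum_add_sum_compl T] at h ⊢
  rw [← sum_add_sum_compl T (fun t => |u t|)] at h
  linarith

lemma sum_compl_abs_le_sum_abs_sub {ι : Type*} [Fintype ι] [DecidableEq ι] {u w : ι → ℝ}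
    {T : Finset ι} (hw : ∀ t ∉ T, w t = 0) :
    ∑ t ∈ Tᶜ, |u t| ≤ ∑ t, |u t - w t| :=
  calc ∑ t ∈ Tᶜ, |u t| = ∑ t ∈ Tᶜ, |u t - w t| :=
        sum_congr rfl fun t ht => by rw [hw t (mem_compl.mp ht), sub_zero]
    _ ≤ ∑ t, |u t - w t| := sum_le_sum_of_subset_of_nonneg (subset_univ _) fun _ _ _ => abs_nonneg _

section

variable {n s N : ℕ} (φ : Matrix (Fin n) (Fin s) ℝ → (Fin N → ℝ))

lemma sum_abs_sub_le_xi_mul {r : ℕ} (A A' : Matrix (Fin n) (Fin s) ℝ) {T : Finset (Fin N)}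
    (hT : T.card ≤ r) :
    ∑ t ∈ T, |φ A t - φ A' t| ≤ xi φ r * ∑ t, |φ A t - φ A' t| := by
  by_cases hne : φ A = φ A'
  · simp [hne]
  have hpos : 0 < ∑ t, |φ A t - φ A' t| := by
    obtain ⟨t, ht⟩ := Function.ne_iff.mp hne
    exact sum_pos' (fun _ _ => abs_nonneg _) ⟨t, mem_univ _, abs_pos.mpr (sub_ne_zero.mpr ht)⟩
  have hbdd : BddAbove {c : ℝ | ∃ A A' : Matrix (Fin n) (Fin s) ℝ, ∃ T : Finset (Fin N),
      φ A ≠ φ A' ∧ T.card ≤ r ∧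
      c = (∑ t ∈ T, |φ A t - φ A' t|) / (∑ t, |φ A t - φ A' t|)} := by
    refine ⟨1, ?_⟩
    rintro c ⟨B, B', S, -, -, rfl⟩
    exact div_le_one_of_le₀ (sum_le_sum_of_subset_of_nonneg (subset_univ _)
      fun _ _ _ => abs_nonneg _) (sum_nonneg fun _ _ => abs_nonneg _)
  have hle := le_csSup hbdd ⟨A, A', T, hne, hT, rfl⟩
  rwa [div_le_iff₀ hpos] at hle

lemma le_deltaR {r : ℕ} {A : Matrix (Fin n) (Fin s) ℝ} {c : ℝ}
    (h : ∀ w : Fin N → ℝ, (univ.filter (fun t => w t ≠ 0)).card ≤ r → c ≤ ∑ t, |φ A t - w t|) :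
    c ≤ deltaR φ r A := by
  refine le_csInf ⟨_, 0, by simp, rfl⟩ ?_
  rintro _ ⟨w, hw, rfl⟩
  exact h w hw

end

/-- Distance to a global minimizer: if `ξ_r < 1/2` and `Â` minimizes `J`, then
`‖φ(A)−φ(Â)‖₁ ≤ 2 δ_r(A)/(1−2ξ_r)` for every `A`. -/
theorem stmt_6 {n s N : ℕ} (φ : Matrix (Fin n) (Fin s) ℝ → (Fin N → ℝ))
    (r : ℕ) (hxi : xi φ r < 1 / 2)
    (Ahat : Matrix (Fin n) (Fin s) ℝ) (hmin : ∀ A, Jcost φ Ahat ≤ Jcost φ A)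
    (A : Matrix (Fin n) (Fin s) ℝ) :
    (∑ t, |φ A t - φ Ahat t|) ≤ (2 / (1 - 2 * xi φ r)) * deltaR φ r A := by
  have hgap : 0 < 1 - 2 * xi φ r := by linarith
  have hδ : (1 - 2 * xi φ r) / 2 * ∑ t, |φ A t - φ Ahat t| ≤ deltaR φ r A := by
    refine le_deltaR φ fun w hw => ?_
    have hsupp : ∀ t ∉ univ.filter (fun t => w t ≠ 0), w t = 0 := by simp
    have := sum_abs_sub_le_of_sum_abs_le (univ.filter (fun t => w t ≠ 0)) (hmin A)
    linarith [sum_abs_sub_le_xi_mul φ A Ahat hw, sum_compl_abs_le_sum_abs_sub (u := φ A) hsupp]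
  rw [div_mul_eq_mul_div, le_div_iff₀ hgap]
  linarith
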